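/- arXiv:0802.3444 — 3 statements merged into one kernel-verified Lean document; each statement's English description precedes it below -/
import Mathlib

section
/- Semantic equivalence for elimination of redundant hypotheses: let R = (H ∧ H' ⇒ C) be a Horn clause such that there is a substitution σ with σH ⊆ H' (multiset inclusion) and σ fixes every variable occurring in H' or C. Then R and R' = (H' ⇒ C) derive exactly the same closed facts: for any set of clauses S and closed fact F, F is derivable from S ∪ {R} iff F is derivable from S ∪ {R'}. -/
/-- First-order terms over function symbols `F`, with natural-number variables. -/
inductive Trm (F : Type) : Type
  | var : Nat → Trm F
  | app : F → List (Trm F) → Trm F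

namespace Trm

variable {F : Type}

/-- Homomorphic extension of a substitution to terms. -/
def subst (σ : Nat → Trm F) : Trm F → Trm F
  | var x => σ x
  | app f ts => app f (ts.attach.map (fun t => subst σ t.1))
decreasing_by
  simp_wf
  have := List.sizeOf_lt_of_mem t.2
  omega

/-- `VarOcc x t` : variable `x` occurs in term `t`. -/
inductive VarOcc (x : Nat) : Trm F → Prop
  | var : VarOcc x (var x)
  | app {f : F} {ts : List (Trm F)} {t : Trm F} : t ∈ ts → VarOcc x t → VarOcc x (app f ts)

end Trm

/-- A term is closed when no variable occurs in it. -/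
def ClosedT {F : Type} (t : Trm F) : Prop := ∀ x, ¬ Trm.VarOcc x t

/-- A fact is an atom `P(t1,...,tn)`. -/
structure Fct (P F : Type) where
  pred : P
  args : List (Trm F)

def Fct.subst {P F : Type} (σ : Nat → Trm F) (a : Fct P F) : Fct P F :=
  ⟨a.pred, a.args.map (Trm.subst σ)⟩

def Fct.Closed {P F : Type} (a : Fct P F) : Prop := ∀ t ∈ a.args, ClosedT t

def Fct.VarOcc {P F : Type} (x : Nat) (a : Fct P F) : Prop := ∃ t ∈ a.args, Trm.VarOcc x t

/-- A Horn clause: a finite multiset of hypotheses and a conclusion. -/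
structure Clause (P F : Type) where
  hyp : Multiset (Fct P F)
  concl : Fct P F

/-- `(H1 ⇒ C1)` subsumes `(H2 ⇒ C2)` iff some substitution σ has `σ C1 = C2` and `σ H1 ⊆ H2`. -/
def Subsumes {P F : Type} (c1 c2 : Clause P F) : Prop :=
  ∃ σ : Nat → Trm F, Fct.subst σ c1.concl = c2.concl ∧ c1.hyp.map (Fct.subst σ) ≤ c2.hyp

/-- Derivability of a closed fact via a finite derivation tree: each node is labeled by a
clause of `R` that subsumes the local inference `{labels of outgoing edges} ⇒ label of
incoming edge`. -/
inductive DTree {P F : Type} (R : Set (Clause P F)) : Fct P F → Prop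
  | node (cl : Clause P F) (hs : Multiset (Fct P F)) (C : Fct P F) :
      cl ∈ R → Subsumes cl ⟨hs, C⟩ → (∀ f ∈ hs, DTree R f) → DTree R C

/-!
Both directions follow from one observation: derivability only depends on clauses up to
subsumption that ignores multiplicities of hypotheses, because a derivation may reuse a
subtree as often as it likes. In this weak sense `(H' ⇒ C)` subsumes `(H ∧ H' ⇒ C)` by the
identity substitution, and `(H ∧ H' ⇒ C)` subsumes `(H' ⇒ C)` by `σ`, which sends `H` into `H'`
and fixes `H'` and `C`.
-/

@[elab_as_elim]
theorem Trm.induction {F : Type} {motive : Trm F → Prop} (var : ∀ x, motive (.var x))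
    (app : ∀ f ts, (∀ t ∈ ts, motive t) → motive (.app f ts)) (t : Trm F) : motive t := by
  induction t using Trm.subst.induct with
  | case1 x => exact var x
  | case2 f ts ih => exact app f ts fun t ht => ih ⟨t, ht⟩

theorem Trm.subst_app {F : Type} (σ : Nat → Trm F) (f : F) (ts : List (Trm F)) :
    Trm.subst σ (.app f ts) = .app f (ts.map (Trm.subst σ)) := by
  rw [Trm.subst]
  simp

theorem Trm.subst_subst {F : Type} (σ τ : Nat → Trm F) (t : Trm F) :
    Trm.subst τ (Trm.subst σ t) = Trm.subst (fun x => Trm.subst τ (σ x)) t := by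
  induction t using Trm.induction with
  | var x => simp [Trm.subst]
  | app f ts ih =>
    simp only [Trm.subst_app, List.map_map, Trm.app.injEq, true_and]
    exact List.map_congr_left ih

theorem Trm.subst_eq_self {F : Type} {σ : Nat → Trm F} {t : Trm F}
    (h : ∀ x, Trm.VarOcc x t → σ x = .var x) : Trm.subst σ t = t := by
  induction t using Trm.induction with
  | var x => simpa [Trm.subst] using h x .var
  | app f ts ih =>
    rw [Trm.subst_app, List.map_congr_left fun t ht => ih t ht fun x hx => h x (.app ht hx)]
    simp

theorem Fct.subst_subst {P F : Type} (σ τ : Nat → Trm F) (a : Fct P F) :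
    Fct.subst τ (Fct.subst σ a) = Fct.subst (fun x => Trm.subst τ (σ x)) a := by
  simp only [Fct.subst, List.map_map, Fct.mk.injEq, true_and]
  exact List.map_congr_left fun t _ => Trm.subst_subst σ τ t

theorem Fct.subst_eq_self {P F : Type} {σ : Nat → Trm F} {a : Fct P F}
    (h : ∀ x, Fct.VarOcc x a → σ x = .var x) : Fct.subst σ a = a := by
  obtain ⟨p, ts⟩ := a
  simp only [Fct.subst, Fct.mk.injEq, true_and]
  rw [List.map_congr_left fun t ht => Trm.subst_eq_self fun x hx => h x ⟨t, ht, hx⟩]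
  simp

def WeaklySubsumes {P F : Type} (c1 c2 : Clause P F) : Prop :=
  ∃ σ : Nat → Trm F, Fct.subst σ c1.concl = c2.concl ∧ ∀ a ∈ c1.hyp, Fct.subst σ a ∈ c2.hyp

namespace WeaklySubsumes

variable {P F : Type} {c1 c2 c3 : Clause P F}

theorem of_subsumes (h : Subsumes c1 c2) : WeaklySubsumes c1 c2 :=
  let ⟨σ, hC, hH⟩ := h
  ⟨σ, hC, fun _ ha => Multiset.mem_of_le hH (Multiset.mem_map_of_mem _ ha)⟩

theorem of_hyp_subset (hC : c1.concl = c2.concl) (hH : ∀ a ∈ c1.hyp, a ∈ c2.hyp) :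
    WeaklySubsumes c1 c2 :=
  ⟨Trm.var, by rw [Fct.subst_eq_self fun _ _ => rfl, hC], fun a ha => by
    rw [Fct.subst_eq_self fun _ _ => rfl]
    exact hH a ha⟩

theorem refl (c : Clause P F) : WeaklySubsumes c c :=
  of_hyp_subset rfl fun _ => id

theorem trans (h12 : WeaklySubsumes c1 c2) (h23 : WeaklySubsumes c2 c3) :
    WeaklySubsumes c1 c3 := by
  obtain ⟨σ, hσC, hσH⟩ := h12
  obtain ⟨τ, hτC, hτH⟩ := h23
  refine ⟨fun x => Trm.subst τ (σ x), ?_, fun a ha => ?_⟩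
  · rw [← Fct.subst_subst, hσC, hτC]
  · rw [← Fct.subst_subst]
    exact hτH _ (hσH a ha)

end WeaklySubsumes

namespace DTree

variable {P F : Type} {R R' : Set (Clause P F)}

theorem node_of_weaklySubsumes {cl : Clause P F} {hs : Multiset (Fct P F)} {C : Fct P F}
    (hcl : cl ∈ R) (hsub : WeaklySubsumes cl ⟨hs, C⟩) (hhs : ∀ f ∈ hs, DTree R f) :
    DTree R C := by
  obtain ⟨σ, hC, hH⟩ := hsub
  refine .node cl (cl.hyp.map (Fct.subst σ)) C hcl ⟨σ, hC, le_rfl⟩ fun f hf => ?_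
  obtain ⟨a, ha, rfl⟩ := Multiset.mem_map.1 hf
  exact hhs _ (hH a ha)

theorem mono_of_weaklySubsumes (h : ∀ cl ∈ R, ∃ cl' ∈ R', WeaklySubsumes cl' cl)
    {G : Fct P F} (hG : DTree R G) : DTree R' G := by
  induction hG with
  | node cl hs C hcl hsub _ ih =>
    obtain ⟨cl', hcl', hcov⟩ := h cl hcl
    exact node_of_weaklySubsumes hcl' (hcov.trans (.of_subsumes hsub)) ih

theorem insert_mono {c c' : Clause P F} {S : Set (Clause P F)} (hc : WeaklySubsumes c' c)
    {G : Fct P F} (hG : DTree (insert c S) G) : DTree (insert c' S) G :=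
  mono_of_weaklySubsumes (fun cl hcl => by
    rcases hcl with rfl | hcl
    · exact ⟨c', Set.mem_insert _ _, hc⟩
    · exact ⟨cl, Set.mem_insert_of_mem _ hcl, .refl cl⟩) hG

end DTree

theorem elim_redundant_hyp_general {P F : Type}
    (H H' : Multiset (Fct P F)) (C : Fct P F) (σ : Nat → Trm F)
    (hsub : H.map (Fct.subst σ) ≤ H')
    (hfix : ∀ x : Nat, ((∃ f ∈ H', Fct.VarOcc x f) ∨ Fct.VarOcc x C) → σ x = Trm.var x)
    (S : Set (Clause P F)) (G : Fct P F) :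
    DTree (insert ⟨H + H', C⟩ S) G ↔ DTree (insert ⟨H', C⟩ S) G := by
  have weaken : WeaklySubsumes ⟨H', C⟩ ⟨H + H', C⟩ :=
    .of_hyp_subset rfl fun _ ha => Multiset.mem_add.2 (.inr ha)
  have restore : WeaklySubsumes ⟨H + H', C⟩ ⟨H', C⟩ := by
    refine ⟨σ, Fct.subst_eq_self fun x hx => hfix x (.inr hx), fun a ha => ?_⟩
    rcases Multiset.mem_add.1 ha with ha | ha
    · exact Multiset.mem_of_le hsub (Multiset.mem_map_of_mem _ ha)
    · rwa [Fct.subst_eq_self fun x hx => hfix x (.inl ⟨a, ha, hx⟩)]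
  exact ⟨DTree.insert_mono weaken, DTree.insert_mono restore⟩

/-- Elimination of redundant hypotheses: if `R = (H ∧ H' ⇒ C)` with a substitution `σ` such
that `σH ⊆ H'` (multisets) and `σ` fixes every variable occurring in `H'` or `C`, then
`R` and `R' = (H' ⇒ C)` derive exactly the same closed facts relative to any clause set. -/
theorem elim_redundant_hyp {P F : Type}
    (H H' : Multiset (Fct P F)) (C : Fct P F) (σ : Nat → Trm F)
    (hsub : H.map (Fct.subst σ) ≤ H')
    (hfix : ∀ x : Nat, ((∃ f ∈ H', Fct.VarOcc x f) ∨ Fct.VarOcc x C) → σ x = Trm.var x)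
    (S : Set (Clause P F)) (G : Fct P F) (hG : G.Closed) :
    DTree (insert ⟨H + H', C⟩ S) G ↔ DTree (insert ⟨H', C⟩ S) G :=
  elim_redundant_hyp_general H H' C σ hsub hfix S G
end

section
/- Elimination of duplicate hypotheses preserves derivability: if R = (H ⇒ C) is a Horn clause and R' = (H' ⇒ C) where H' is the multiset H with one duplicated occurrence of a fact removed (i.e., H = H' ⊎ {F} with F ∈ H'), then for any set of clauses S and closed fact G, G is derivable from S ∪ {R} iff G is derivable from S ∪ {R'}. -/
/-!
Each clause of either set is an admissible rule over the other. Dropping a hypothesis only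
weakens the subsumption requirement at a node; conversely, a node labelled `(H' ⇒ C)` with
substitution `σ` becomes a node labelled `(Fd ⊎ H' ⇒ C)` by repeating the premise `σ Fd`, which
is already derived because `Fd ∈ H'`.
-/

namespace Subsumes

variable {P F : Type}

theorem of_hyp_le {H H' : Multiset (Fct P F)} {C : Fct P F} {d : Clause P F} (hle : H ≤ H')
    (h : Subsumes ⟨H', C⟩ d) : Subsumes ⟨H, C⟩ d := by
  obtain ⟨σ, hconcl, hhyp⟩ := h
  exact ⟨σ, hconcl, (Multiset.map_le_map hle).trans hhyp⟩

theorem cons_of_mem {H hs : Multiset (Fct P F)} {Fd C D : Fct P F} (hFd : Fd ∈ H)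
    (h : Subsumes ⟨H, C⟩ ⟨hs, D⟩) : ∃ F' ∈ hs, Subsumes ⟨Fd ::ₘ H, C⟩ ⟨F' ::ₘ hs, D⟩ := by
  obtain ⟨σ, hconcl, hhyp⟩ := h
  refine ⟨Fct.subst σ Fd, Multiset.mem_of_le hhyp (Multiset.mem_map_of_mem _ hFd), σ, hconcl, ?_⟩
  simpa using Multiset.cons_le_cons (Fct.subst σ Fd) hhyp

end Subsumes

def Admissible {P F : Type} (R : Set (Clause P F)) (cl : Clause P F) : Prop :=
  ∀ hs C, Subsumes cl ⟨hs, C⟩ → (∀ f ∈ hs, DTree R f) → DTree R C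

namespace DTree

variable {P F : Type}

theorem admissible_of_mem {R : Set (Clause P F)} {cl : Clause P F} (hcl : cl ∈ R) :
    Admissible R cl :=
  fun hs C hsub hders => .node cl hs C hcl hsub hders

theorem of_forall_admissible {R R' : Set (Clause P F)} (hR : ∀ cl ∈ R, Admissible R' cl)
    {G : Fct P F} (h : DTree R G) : DTree R' G := by
  induction h with
  | node cl hs C hcl hsub _ ih => exact hR cl hcl hs C hsub ih

end DTree

theorem elim_duplicate_hyp_general {P F : Type}
    (H' : Multiset (Fct P F)) (Fd C : Fct P F) (hFd : Fd ∈ H')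
    (S : Set (Clause P F)) (G : Fct P F) :
    DTree (insert ⟨Fd ::ₘ H', C⟩ S) G ↔ DTree (insert ⟨H', C⟩ S) G := by
  refine ⟨DTree.of_forall_admissible ?_, DTree.of_forall_admissible ?_⟩ <;>
    refine Set.forall_mem_insert.2
      ⟨?_, fun cl hcl => DTree.admissible_of_mem (Set.mem_insert_of_mem _ hcl)⟩
  · intro hs D hsub hders
    exact .node _ hs D (Set.mem_insert _ _) (hsub.of_hyp_le (Multiset.le_cons_self _ _)) hders
  · intro hs D hsub hders
    obtain ⟨F', hF', hsub'⟩ := hsub.cons_of_mem hFd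
    exact .node _ _ D (Set.mem_insert _ _) hsub' (Multiset.forall_mem_cons.2 ⟨hders F' hF', hders⟩)

/-- Elimination of duplicate hypotheses preserves derivability: if `H = H' ⊎ {Fd}` with
`Fd ∈ H'`, then `(H ⇒ C)` and `(H' ⇒ C)` derive the same closed facts relative to any
clause set `S`. -/
theorem elim_duplicate_hyp {P F : Type}
    (H' : Multiset (Fct P F)) (Fd C : Fct P F) (hFd : Fd ∈ H')
    (S : Set (Clause P F)) (G : Fct P F) (hG : G.Closed) :
    DTree (insert ⟨Fd ::ₘ H', C⟩ S) G ↔ DTree (insert ⟨H', C⟩ S) G :=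
  elim_duplicate_hyp_general H' Fd C hFd S G
end

section
/- Variable occurrence invariant is preserved by resolution: say a clause H ⇒ C is 'grounded-by-hypotheses' if every variable occurring in C also occurs in some non-m-event fact of H. If R = (H ⇒ C) and R' = (H' ∧ F0 ⇒ C') are grounded-by-hypotheses clauses, C and F0 unify with most general unifier σu, and F0 is not an m-event fact, then the resolvent R'' = (σu H ∧ σu H' ⇒ σu C') is grounded-by-hypotheses. -/
/-- A clause is grounded-by-hypotheses when every variable of its conclusion occurs in some
non-m-event fact of its hypotheses. -/
def Grounded {P F : Type} (mevent : P) (c : Clause P F) : Prop :=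
  ∀ x : Nat, Fct.VarOcc x c.concl → ∃ f ∈ c.hyp, f.pred ≠ mevent ∧ Fct.VarOcc x f


/- Resolution is substitution by the unifier followed by a cut on the unified fact. Substitution
preserves groundedness, since a variable of `σ t` comes from a variable `y` of `t`, and `σ y`
appears wherever `y` does. A cut `(H ⇒ C)`, `(C ∧ H' ⇒ C')` ⊢ `(H ∧ H' ⇒ C')` preserves it
too: a variable of `C'` is witnessed either in `H'` or in `C`, and then in `H`. -/

namespace Trm

variable {F : Type}

theorem subst_app_s16 (σ : Nat → Trm F) (f : F) (ts : List (Trm F)) :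
    subst σ (app f ts) = app f (ts.map (subst σ)) := by
  rw [subst, List.attach_map_val]

theorem VarOcc.subst {σ : Nat → Trm F} {x y : Nat} {t : Trm F}
    (hy : VarOcc y t) (hx : VarOcc x (σ y)) : VarOcc x (subst σ t) := by
  induction hy with
  | var => rwa [Trm.subst]
  | app hmem _ ih =>
    rw [subst_app_s16]
    exact .app (List.mem_map_of_mem hmem) ih

theorem VarOcc.of_subst {σ : Nat → Trm F} {x : Nat} :
    ∀ {t : Trm F}, VarOcc x (Trm.subst σ t) → ∃ y, VarOcc y t ∧ VarOcc x (σ y)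
  | Trm.var z, h => ⟨z, .var, by rwa [Trm.subst] at h⟩
  | Trm.app f ts, h => by
    rw [subst_app_s16] at h
    obtain _ | ⟨hmem, hocc⟩ := h
    obtain ⟨s, hs, rfl⟩ := List.mem_map.mp hmem
    obtain ⟨y, hys, hxy⟩ := VarOcc.of_subst hocc
    exact ⟨y, .app hs hys, hxy⟩

theorem varOcc_subst_iff {σ : Nat → Trm F} {x : Nat} {t : Trm F} :
    VarOcc x (subst σ t) ↔ ∃ y, VarOcc y t ∧ VarOcc x (σ y) :=
  ⟨VarOcc.of_subst, fun ⟨_, hy, hx⟩ => hy.subst hx⟩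

end Trm

variable {P F : Type}

theorem Fct.varOcc_subst_iff {σ : Nat → Trm F} {x : Nat} {a : Fct P F} :
    (a.subst σ).VarOcc x ↔ ∃ y, a.VarOcc y ∧ Trm.VarOcc x (σ y) := by
  constructor
  · rintro ⟨_, ht, hx⟩
    obtain ⟨s, hs, rfl⟩ := List.mem_map.mp ht
    obtain ⟨y, hys, hxy⟩ := Trm.varOcc_subst_iff.mp hx
    exact ⟨y, ⟨s, hs, hys⟩, hxy⟩
  · rintro ⟨y, ⟨s, hs, hys⟩, hxy⟩
    exact ⟨s.subst σ, List.mem_map_of_mem hs, hys.subst hxy⟩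

namespace Grounded

variable {mevent : P} {H H' : Multiset (Fct P F)} {C C' : Fct P F}

theorem subst (σ : Nat → Trm F) (h : Grounded mevent ⟨H, C⟩) :
    Grounded mevent ⟨H.map (Fct.subst σ), C.subst σ⟩ := by
  intro x hx
  obtain ⟨y, hyC, hxy⟩ := Fct.varOcc_subst_iff.mp hx
  obtain ⟨f, hf, hpred, hyf⟩ := h y hyC
  exact ⟨f.subst σ, Multiset.mem_map_of_mem _ hf, hpred, Fct.varOcc_subst_iff.mpr ⟨y, hyf, hxy⟩⟩

theorem cut (h : Grounded mevent ⟨H, C⟩) (h' : Grounded mevent ⟨C ::ₘ H', C'⟩) :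
    Grounded mevent ⟨H + H', C'⟩ := by
  intro x hx
  obtain ⟨f, hf, hpred, hxf⟩ := h' x hx
  rcases Multiset.mem_cons.mp hf with rfl | hfH'
  · obtain ⟨g, hg, hgpred, hxg⟩ := h x hxf
    exact ⟨g, Multiset.mem_add.mpr (.inl hg), hgpred, hxg⟩
  · exact ⟨f, Multiset.mem_add.mpr (.inr hfH'), hpred, hxf⟩

end Grounded

theorem grounded_preserved_by_resolution_general {P F : Type} (mevent : P)
    (H H' : Multiset (Fct P F)) (C C' F0 : Fct P F) (σu : Nat → Trm F)
    (h1 : Grounded mevent ⟨H, C⟩)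
    (h2 : Grounded mevent ⟨F0 ::ₘ H', C'⟩)
    (hu : Fct.subst σu C = Fct.subst σu F0) :
    Grounded mevent ⟨(H + H').map (Fct.subst σu), Fct.subst σu C'⟩ := by
  have h2σ := h2.subst σu
  rw [Multiset.map_cons, ← hu] at h2σ
  rw [Multiset.map_add]
  exact (h1.subst σu).cut h2σ

/-- The grounded-by-hypotheses invariant is preserved by resolution: if `R = (H ⇒ C)` and
`R' = (H' ∧ F0 ⇒ C')` are grounded-by-hypotheses, `C` and `F0` unify with most general
unifier `σu`, and `F0` is not an m-event fact, then the resolvent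
`(σu H ∧ σu H' ⇒ σu C')` is grounded-by-hypotheses. -/
theorem grounded_preserved_by_resolution {P F : Type} (mevent : P)
    (H H' : Multiset (Fct P F)) (C C' F0 : Fct P F) (σu : Nat → Trm F)
    (h1 : Grounded mevent ⟨H, C⟩)
    (h2 : Grounded mevent ⟨F0 ::ₘ H', C'⟩)
    (hF0 : F0.pred ≠ mevent)
    (hu : Fct.subst σu C = Fct.subst σu F0)
    (hmgu : ∀ δ : Nat → Trm F, Fct.subst δ C = Fct.subst δ F0 →
      ∃ δ' : Nat → Trm F, ∀ x, δ x = Trm.subst δ' (σu x)) :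
    Grounded mevent ⟨(H + H').map (Fct.subst σu), Fct.subst σu C'⟩ :=
  grounded_preserved_by_resolution_general mevent H H' C C' F0 σu h1 h2 hu
end
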